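/- (Representer theorem for the inverse problem.) Let ψ : [0,∞) → [0,∞) be continuous, convex and strictly increasing, λ > 0, and let f̂^{(n)}_{R,λ} be the minimizer over H1 of f ↦ (1/n) Σ_{i=1}^n V(y_i, (Af)(x_i)) + λψ(‖f‖_{H1}), where V(y_i, ·) is lower semicontinuous, strictly convex and coercive. Then f̂^{(n)}_{R,λ} ∈ span{φ_{x_1},…,φ_{x_n}}; i.e. f̂^{(n)}_{R,λ} = Σ_{i=1}^n β_i φ_{x_i} for some real coefficients β_i, and these are the same coefficients for which the corresponding regularized minimizer over H_K satisfies ĝ^{(n)}_{R,λ} = Σ_{i=1}^n β_i K_{x_i}. -/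

import Mathlib

/-! The orthogonal projection of `f̂` onto `span {φ_{x_i}}` has the same inner products with every
`φ_{x_i}`, hence the same data-fit term `(A f)(x_i) = ⟪f, φ_{x_i}⟫`, and no larger norm; since `ψ`
is monotone it is again a minimizer, so by uniqueness it is `f̂`.
For `H_K`, every `g ∈ Im(A)` has a preimage `v` with `‖v‖ = ‖g‖_{H_K}` (a minimal-norm point of the
closed affine subspace `A⁻¹{g}`), while `‖A f̂‖_{H_K} ≤ ‖f̂‖`; comparing `f̂` with `v` shows that
`A f̂` minimizes the risk over `H_K`, so `ĝ = A f̂ = Σ β_i A φ_{x_i}`. -/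

open RealInnerProductSpace

/-- The `H_K`-norm of `g ∈ Im(A)`: the minimal `H1`-norm of a preimage of `g` under `A`. -/
noncomputable def KNorm {H1 H2 : Type*}
    [NormedAddCommGroup H1] [InnerProductSpace ℝ H1]
    [NormedAddCommGroup H2] [InnerProductSpace ℝ H2]
    (A : H1 →L[ℝ] H2) (g : H2) : ℝ :=
  sInf {r : ℝ | ∃ w : H1, A w = g ∧ ‖w‖ = r}

section MinimalNormPreimage

variable {H1 H2 : Type*} [NormedAddCommGroup H1] [InnerProductSpace ℝ H1]
  [NormedAddCommGroup H2] [InnerProductSpace ℝ H2] (A : H1 →L[ℝ] H2)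

lemma KNorm_nonneg (g : H2) : 0 ≤ KNorm A g :=
  Real.sInf_nonneg fun _ ⟨w, _, hw⟩ => hw ▸ norm_nonneg w

lemma KNorm_map_le_norm (f : H1) : KNorm A (A f) ≤ ‖f‖ :=
  csInf_le ⟨0, fun _ ⟨w, _, hw⟩ => hw ▸ norm_nonneg w⟩ ⟨f, rfl, rfl⟩

lemma exists_map_eq_and_norm_eq_KNorm [CompleteSpace H1] (f : H1) :
    ∃ v : H1, A v = A f ∧ ‖v‖ = KNorm A (A f) := by
  set s : Set H1 := A ⁻¹' {A f}
  have hconv : Convex ℝ s := (convex_singleton (A f)).linear_preimage A.toLinearMap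
  have hclosed : IsClosed s := isClosed_singleton.preimage A.continuous
  obtain ⟨v, hv, hmin⟩ :=
    exists_norm_eq_iInf_of_complete_convex (K := s) ⟨f, rfl⟩ hclosed.isComplete hconv 0
  refine ⟨v, hv, le_antisymm (le_csInf ⟨‖f‖, f, rfl, rfl⟩ ?_) (hv ▸ KNorm_map_le_norm A v)⟩
  rintro _ ⟨w, hw, rfl⟩
  have hbdd : BddBelow (Set.range fun w : s => ‖(0 : H1) - w‖) :=
    ⟨0, Set.forall_mem_range.2 fun _ => norm_nonneg _⟩
  have hle := ciInf_le hbdd ⟨w, hw⟩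
  rw [← hmin] at hle
  simpa using hle

lemma add_KNorm_map_le_of_forall_le [CompleteSpace H1] {L : H2 → ℝ} {Ψ : ℝ → ℝ}
    (hΨ : MonotoneOn Ψ (Set.Ici 0)) {fhat : H1}
    (hmin : ∀ f, L (A fhat) + Ψ ‖fhat‖ ≤ L (A f) + Ψ ‖f‖) (w : H1) :
    L (A fhat) + Ψ (KNorm A (A fhat)) ≤ L (A w) + Ψ (KNorm A (A w)) := by
  obtain ⟨v, hvw, hv⟩ := exists_map_eq_and_norm_eq_KNorm A w
  calc L (A fhat) + Ψ (KNorm A (A fhat))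
      ≤ L (A fhat) + Ψ ‖fhat‖ := by
        gcongr
        exact hΨ (KNorm_nonneg A _) (norm_nonneg _) (KNorm_map_le_norm A fhat)
    _ ≤ L (A v) + Ψ ‖v‖ := hmin v
    _ = L (A w) + Ψ (KNorm A (A w)) := by rw [hvw, hv]

end MinimalNormPreimage

section Representer

variable {H ι : Type*} [NormedAddCommGroup H] [InnerProductSpace ℝ H]

lemma inner_starProjection_eq_of_mem (K : Submodule ℝ H) [K.HasOrthogonalProjection] (f : H)
    {v : H} (hv : v ∈ K) : ⟪K.starProjection f, v⟫ = ⟪f, v⟫ := by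
  rw [Submodule.inner_starProjection_left_eq_right, Submodule.starProjection_eq_self_iff.mpr hv]

theorem mem_span_range_of_unique_minimizer [Finite ι] (u : ι → H) {L : (ι → ℝ) → ℝ}
    {Ψ : ℝ → ℝ} (hΨ : MonotoneOn Ψ (Set.Ici 0)) {fhat : H}
    (hmin : ∀ f, L (fun i => ⟪fhat, u i⟫) + Ψ ‖fhat‖ ≤ L (fun i => ⟪f, u i⟫) + Ψ ‖f‖)
    (huniq : ∀ f, (∀ f', L (fun i => ⟪f, u i⟫) + Ψ ‖f‖ ≤ L (fun i => ⟪f', u i⟫) + Ψ ‖f'‖) →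
      f = fhat) :
    fhat ∈ Submodule.span ℝ (Set.range u) := by
  set S := Submodule.span ℝ (Set.range u)
  have := FiniteDimensional.span_of_finite ℝ (Set.finite_range u)
  set p := S.starProjection fhat
  have hp_le : L (fun i => ⟪p, u i⟫) + Ψ ‖p‖ ≤ L (fun i => ⟪fhat, u i⟫) + Ψ ‖fhat‖ := by
    simp only [p, inner_starProjection_eq_of_mem S fhat (Submodule.subset_span ⟨_, rfl⟩)]
    gcongr
    exact hΨ (norm_nonneg _) (norm_nonneg _) (S.norm_starProjection_apply_le fhat)
  rw [← huniq p fun f' => hp_le.trans (hmin f')]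
  exact S.starProjection_apply_mem fhat

end Representer

theorem stmt9_general
    {H1 H2 X : Type*}
    [NormedAddCommGroup H1] [InnerProductSpace ℝ H1] [CompleteSpace H1]
    [NormedAddCommGroup H2] [InnerProductSpace ℝ H2]
    -- `H2` is a space of functions on `X`, with evaluation `e`
    (e : H2 →ₗ[ℝ] X → ℝ)
    (A : H1 →L[ℝ] H2)
    (φ : X → H1) (hφ : ∀ (x : X) (f : H1), e (A f) x = ⟪f, φ x⟫)
    -- the samples
    (n : ℕ) (x : Fin n → X) (yv : Fin n → ℝ)
    -- the loss function
    (V : ℝ → ℝ → ℝ)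
    -- the penalty
    (ψ : ℝ → ℝ)
    (hψmono : StrictMonoOn ψ (Set.Ici 0))
    (lam : ℝ) (hlam : 0 < lam)
    -- `fhat = f̂⁽ⁿ⁾_{R,λ}` is the (unique) minimizer of the regularized empirical risk
    -- over `H1`
    (fhat : H1)
    (hfhat_min : ∀ f : H1,
      (n : ℝ)⁻¹ * ∑ i, V (yv i) (e (A fhat) (x i)) + lam * ψ ‖fhat‖
        ≤ (n : ℝ)⁻¹ * ∑ i, V (yv i) (e (A f) (x i)) + lam * ψ ‖f‖)
    (hfhat_uniq : ∀ f : H1,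
      (∀ f' : H1,
        (n : ℝ)⁻¹ * ∑ i, V (yv i) (e (A f) (x i)) + lam * ψ ‖f‖
          ≤ (n : ℝ)⁻¹ * ∑ i, V (yv i) (e (A f') (x i)) + lam * ψ ‖f'‖) →
      f = fhat)
    -- `ghat = ĝ⁽ⁿ⁾_{R,λ}` is the (unique) minimizer of the regularized empirical risk
    -- over `H_K = Im(A)`
    (ghat : H2)
    (hghat_uniq : ∀ g ∈ Set.range A,
      (∀ g' ∈ Set.range A,
        (n : ℝ)⁻¹ * ∑ i, V (yv i) (e g (x i)) + lam * ψ (KNorm A g)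
          ≤ (n : ℝ)⁻¹ * ∑ i, V (yv i) (e g' (x i)) + lam * ψ (KNorm A g')) →
      g = ghat) :
    ∃ β : Fin n → ℝ,
      fhat = ∑ i, β i • φ (x i) ∧ ghat = ∑ i, β i • A (φ (x i)) := by
  have hpenalty : MonotoneOn (fun r => lam * ψ r) (Set.Ici 0) := fun _ ha _ hb hab =>
    mul_le_mul_of_nonneg_left (hψmono.monotoneOn ha hb hab) hlam.le
  have hspan : fhat ∈ Submodule.span ℝ (Set.range fun i => φ (x i)) :=
    mem_span_range_of_unique_minimizer _ (L := fun t => (n : ℝ)⁻¹ * ∑ i, V (yv i) (t i))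
      hpenalty (by simpa only [hφ] using hfhat_min) (by simpa only [hφ] using hfhat_uniq)
  obtain ⟨β, hβ⟩ := (Submodule.mem_span_range_iff_exists_fun ℝ).mp hspan
  have hghat : A fhat = ghat := hghat_uniq _ ⟨fhat, rfl⟩ <| by
    rintro _ ⟨w, rfl⟩
    exact add_KNorm_map_le_of_forall_le A (L := fun g => (n : ℝ)⁻¹ * ∑ i, V (yv i) (e g (x i)))
      hpenalty hfhat_min w
  refine ⟨β, hβ.symm, ?_⟩
  simp only [← hghat, ← hβ, map_sum, map_smul]

/-- **Representer theorem for the inverse problem.**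
Let `ψ : [0,∞) → [0,∞)` be continuous, convex and strictly increasing, `λ > 0`, and let
`f̂⁽ⁿ⁾_{R,λ}` minimize `f ↦ (1/n) Σ_i V(y_i, (Af)(x_i)) + λψ(‖f‖_{H1})` over `H1`.  Then
`f̂⁽ⁿ⁾_{R,λ} = Σ_i β_i φ_{x_i}` for some real coefficients `β_i`, and the same coefficients
represent the regularized minimizer over `H_K`: `ĝ⁽ⁿ⁾_{R,λ} = Σ_i β_i K_{x_i}` (with
`K_{x_i} = A φ_{x_i}`). -/
theorem stmt9
    {H1 H2 X : Type*}
    [NormedAddCommGroup H1] [InnerProductSpace ℝ H1] [CompleteSpace H1]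
    [TopologicalSpace.SeparableSpace H1]
    [NormedAddCommGroup H2] [InnerProductSpace ℝ H2] [CompleteSpace H2]
    -- `H2` is a space of functions on `X`, with evaluation `e`
    (e : H2 →ₗ[ℝ] X → ℝ) (he : Function.Injective e)
    (A : H1 →L[ℝ] H2) (c : ℝ) (hc : 0 < c)
    (hbound : ∀ (x : X) (f : H1), |e (A f) x| ≤ c * ‖f‖)
    (φ : X → H1) (hφ : ∀ (x : X) (f : H1), e (A f) x = ⟪f, φ x⟫)
    -- the samples
    (n : ℕ) (hn : 0 < n) (x : Fin n → X) (yv : Fin n → ℝ)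
    -- the loss function
    (V : ℝ → ℝ → ℝ) (hVnonneg : ∀ a t, 0 ≤ V a t)
    (hVlsc : ∀ i : Fin n, LowerSemicontinuous (V (yv i)))
    (hVconv : ∀ i : Fin n, StrictConvexOn ℝ Set.univ (V (yv i)))
    (hVcoer : ∀ i : Fin n, ∀ M : ℝ, ∃ r : ℝ, ∀ t : ℝ, r ≤ |t| → M ≤ V (yv i) t)
    -- the penalty
    (ψ : ℝ → ℝ)
    (hψcont : ContinuousOn ψ (Set.Ici 0))
    (hψconv : ConvexOn ℝ (Set.Ici 0) ψ)
    (hψmono : StrictMonoOn ψ (Set.Ici 0))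
    (hψnonneg : ∀ t ∈ Set.Ici (0 : ℝ), 0 ≤ ψ t)
    (lam : ℝ) (hlam : 0 < lam)
    -- `fhat = f̂⁽ⁿ⁾_{R,λ}` is the (unique) minimizer of the regularized empirical risk
    -- over `H1`
    (fhat : H1)
    (hfhat_min : ∀ f : H1,
      (n : ℝ)⁻¹ * ∑ i, V (yv i) (e (A fhat) (x i)) + lam * ψ ‖fhat‖
        ≤ (n : ℝ)⁻¹ * ∑ i, V (yv i) (e (A f) (x i)) + lam * ψ ‖f‖)
    (hfhat_uniq : ∀ f : H1,
      (∀ f' : H1,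
        (n : ℝ)⁻¹ * ∑ i, V (yv i) (e (A f) (x i)) + lam * ψ ‖f‖
          ≤ (n : ℝ)⁻¹ * ∑ i, V (yv i) (e (A f') (x i)) + lam * ψ ‖f'‖) →
      f = fhat)
    -- `ghat = ĝ⁽ⁿ⁾_{R,λ}` is the (unique) minimizer of the regularized empirical risk
    -- over `H_K = Im(A)`
    (ghat : H2) (hghat_mem : ghat ∈ Set.range A)
    (hghat_min : ∀ g ∈ Set.range A,
      (n : ℝ)⁻¹ * ∑ i, V (yv i) (e ghat (x i)) + lam * ψ (KNorm A ghat)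
        ≤ (n : ℝ)⁻¹ * ∑ i, V (yv i) (e g (x i)) + lam * ψ (KNorm A g))
    (hghat_uniq : ∀ g ∈ Set.range A,
      (∀ g' ∈ Set.range A,
        (n : ℝ)⁻¹ * ∑ i, V (yv i) (e g (x i)) + lam * ψ (KNorm A g)
          ≤ (n : ℝ)⁻¹ * ∑ i, V (yv i) (e g' (x i)) + lam * ψ (KNorm A g')) →
      g = ghat) :
    ∃ β : Fin n → ℝ,
      fhat = ∑ i, β i • φ (x i) ∧ ghat = ∑ i, β i • A (φ (x i)) :=
  stmt9_general e A φ hφ n x yv V ψ hψmono lam hlam fhat hfhat_min hfhat_uniq ghat hghat_uniq
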